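/- arXiv:1111.0414 — 4 statements merged into one kernel-verified Lean document; each statement's English description precedes it below -/
import Mathlib

section
/- Let H ∈ ℝ^{k×n}, let P ∈ ℝ^{n×n} be symmetric positive definite, Q ⊂ ℝ^ℓ compact, A : ℝ^ℓ → ℝ^{n×n} continuous, and let d̄, d ∈ ℝ with d̄ < d. Suppose eᵀ P A(q) e ≤ −d · eᵀ P e for all e ∈ ker H and all q ∈ Q. Then there exists φ > 0 such that wᵀ P A(q) w ≤ φ |H w|² − d̄ · wᵀ P w for all w ∈ ℝ^n and all q ∈ Q. -/
open scoped Matrix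

/-!
On the compact set `(unit sphere) × Q`, the quantity `wᵀPA(q)w + d̄ wᵀPw` is negative wherever
`Hw = 0`, since there it is at most `(d̄ - d) wᵀPw < 0`; compactness therefore makes it dominated by
`φ |Hw|²` for one `φ > 0`. Both sides are homogeneous of degree two in `w`, which extends the bound
from the sphere to all of `ℝⁿ`.
-/

/-- The sets `{f < (N + 1) * g}` increase with `N` and cover `S`, so by compactness one of them
already contains `S`. -/
theorem IsCompact.exists_pos_le_mul {X : Type*} [TopologicalSpace X] {S : Set X}
    (hS : IsCompact S) {f g : X → ℝ} (hf : Continuous f) (hg : Continuous g) (hg₀ : ∀ x, 0 ≤ g x)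
    (hfg : ∀ x ∈ S, g x = 0 → f x < 0) :
    ∃ φ : ℝ, 0 < φ ∧ ∀ x ∈ S, f x ≤ φ * g x := by
  let U : ℕ → Set X := fun N => {x | f x < (N + 1) * g x}
  have hU_open : ∀ N, IsOpen (U N) := fun N =>
    isOpen_lt hf (continuous_const.mul hg)
  have hU_mono : Monotone U := fun N M hNM x (hx : f x < (N + 1) * g x) => by
    have : (N : ℝ) ≤ M := Nat.cast_le.mpr hNM
    change f x < (M + 1) * g x
    nlinarith [hg₀ x]
  have hS_cover : S ⊆ ⋃ N, U N := by
    intro x hx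
    rcases (hg₀ x).eq_or_lt with hgx | hgx
    · exact Set.mem_iUnion.mpr ⟨0, by simpa [U, ← hgx] using hfg x hx hgx.symm⟩
    · obtain ⟨N, hN⟩ := exists_nat_gt (f x / g x)
      refine Set.mem_iUnion.mpr ⟨N, ?_⟩
      change f x < (N + 1) * g x
      rw [div_lt_iff₀ hgx] at hN
      nlinarith
  obtain ⟨N, hN⟩ := hS.elim_directed_cover U hU_open hS_cover hU_mono.directed_le
  exact ⟨N + 1, by positivity, fun x hx => (hN hx).le⟩

theorem forall_nonpos_of_forall_sphere_nonpos {E : Type*} [NormedAddCommGroup E]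
    [NormedSpace ℝ E] {f : E → ℝ} (hf : ∀ (c : ℝ) x, f (c • x) = c ^ 2 * f x)
    (h : ∀ x ∈ Metric.sphere (0 : E) 1, f x ≤ 0) (x : E) : f x ≤ 0 := by
  rcases eq_or_ne x 0 with rfl | hx
  · exact (by simpa using hf 0 0 : f 0 = 0).le
  · have hnorm : 0 < ‖x‖ := norm_pos_iff.mpr hx
    have hu : ‖x‖⁻¹ • x ∈ Metric.sphere (0 : E) 1 := by
      rw [mem_sphere_zero_iff_norm, norm_smul, norm_inv, norm_norm, inv_mul_cancel₀ hnorm.ne']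
    have hx_eq : x = ‖x‖ • ‖x‖⁻¹ • x := by rw [smul_smul, mul_inv_cancel₀ hnorm.ne', one_smul]
    rw [hx_eq, hf]
    exact mul_nonpos_of_nonneg_of_nonpos (sq_nonneg _) (h _ hu)

theorem Matrix.smul_dotProduct_mulVec_smul {m R : Type*} [Fintype m] [CommRing R]
    (B : Matrix m m R) (c : R) (v : m → R) :
    (c • v) ⬝ᵥ B *ᵥ (c • v) = c ^ 2 * (v ⬝ᵥ B *ᵥ v) := by
  rw [Matrix.mulVec_smul, dotProduct_smul, smul_dotProduct, smul_eq_mul, smul_eq_mul]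
  ring

theorem stmt3_general (k ℓ n : ℕ)
    (H : Matrix (Fin k) (Fin n) ℝ)
    (P : Matrix (Fin n) (Fin n) ℝ)
    (hPpos : ∀ e : Fin n → ℝ, e ≠ 0 → 0 < e ⬝ᵥ P.mulVec e)
    (Q : Set (EuclideanSpace ℝ (Fin ℓ))) (hQ : IsCompact Q)
    (A : EuclideanSpace ℝ (Fin ℓ) → Matrix (Fin n) (Fin n) ℝ)
    (hA : ∀ i j, Continuous fun q => A q i j)
    (dbar d : ℝ) (hd : dbar < d)
    (hker : ∀ e : Fin n → ℝ, H.mulVec e = 0 → ∀ q ∈ Q,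
      e ⬝ᵥ P.mulVec ((A q).mulVec e) ≤ -d * (e ⬝ᵥ P.mulVec e)) :
    ∃ φ : ℝ, 0 < φ ∧ ∀ (w : Fin n → ℝ), ∀ q ∈ Q,
      w ⬝ᵥ P.mulVec ((A q).mulVec w) ≤
        φ * (∑ i, (H.mulVec w i) ^ 2) - dbar * (w ⬝ᵥ P.mulVec w) := by
  simp only [Matrix.mulVec_mulVec] at hker ⊢
  have hA_cont : Continuous A := continuous_pi fun i => continuous_pi fun j => hA i j
  have hneg_on_ker : ∀ p ∈ Metric.sphere (0 : Fin n → ℝ) 1 ×ˢ Q, ∑ i, (H *ᵥ p.1) i ^ 2 = 0 →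
      p.1 ⬝ᵥ (P * A p.2) *ᵥ p.1 + dbar * (p.1 ⬝ᵥ P *ᵥ p.1) < 0 := by
    rintro ⟨w, q⟩ ⟨hw, hq⟩ hHw
    have hHw : H *ᵥ w = 0 := funext fun i =>
      pow_eq_zero_iff two_ne_zero |>.mp <|
        (Finset.sum_eq_zero_iff_of_nonneg fun i _ => sq_nonneg _).mp hHw i (Finset.mem_univ i)
    have hw₀ : w ≠ 0 := ne_zero_of_mem_unit_sphere ⟨w, hw⟩
    nlinarith [hker w hHw q hq, hPpos w hw₀]
  obtain ⟨φ, hφ, hφ_sphere⟩ := ((isCompact_sphere (0 : Fin n → ℝ) 1).prod hQ).exists_pos_le_mul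
    (by fun_prop) (by fun_prop) (fun p => Finset.sum_nonneg fun i _ => sq_nonneg _) hneg_on_ker
  refine ⟨φ, hφ, fun w q hq => ?_⟩
  have := forall_nonpos_of_forall_sphere_nonpos
    (f := fun w => w ⬝ᵥ (P * A q) *ᵥ w + dbar * (w ⬝ᵥ P *ᵥ w) - φ * ∑ i, (H *ᵥ w) i ^ 2)
    (fun c w => by
      rw [Matrix.smul_dotProduct_mulVec_smul, Matrix.smul_dotProduct_mulVec_smul]
      simp only [Matrix.mulVec_smul, Pi.smul_apply, smul_eq_mul, mul_pow, ← Finset.mul_sum]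
      ring)
    (fun w hw => sub_nonpos.mpr (hφ_sphere (w, q) ⟨hw, hq⟩)) w
  linarith

/-- time-frozen version of Proposition 2.1: a matrix inequality holding on
`ker H` can be extended to all of `ℝ^n` at the cost of adding a multiple of `|Hw|²`. -/
theorem stmt3 (k ℓ n : ℕ)
    (H : Matrix (Fin k) (Fin n) ℝ)
    (P : Matrix (Fin n) (Fin n) ℝ) (hPsymm : P.IsSymm)
    (hPpos : ∀ e : Fin n → ℝ, e ≠ 0 → 0 < e ⬝ᵥ P.mulVec e)
    (Q : Set (EuclideanSpace ℝ (Fin ℓ))) (hQ : IsCompact Q)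
    (A : EuclideanSpace ℝ (Fin ℓ) → Matrix (Fin n) (Fin n) ℝ)
    (hA : ∀ i j, Continuous fun q => A q i j)
    (dbar d : ℝ) (hd : dbar < d)
    (hker : ∀ e : Fin n → ℝ, H.mulVec e = 0 → ∀ q ∈ Q,
      e ⬝ᵥ P.mulVec ((A q).mulVec e) ≤ -d * (e ⬝ᵥ P.mulVec e)) :
    ∃ φ : ℝ, 0 < φ ∧ ∀ (w : Fin n → ℝ), ∀ q ∈ Q,
      w ⬝ᵥ P.mulVec ((A q).mulVec w) ≤
        φ * (∑ i, (H.mulVec w i) ^ 2) - dbar * (w ⬝ᵥ P.mulVec w) :=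
  stmt3_general k ℓ n H P hPpos Q hQ A hA dbar d hd hker
end

section
/- Let P : [t̄0, ∞) → ℝ^{n×n} be C¹ symmetric with P(t) ≥ I and |P(t̄0)| ≤ L for some L > 1, let d̄ : [t̄0, ∞) → ℝ be continuous with ∫_{t̄0}^{t} d̄(s) ds > −ε̄ for all t ≥ t̄0 and ∫_{t̄0}^{∞} d̄(s) ds = ∞, and let e : [t̄0, ∞) → ℝ^n be C¹ with (d/dt)(½ e(t)ᵀ P(t) e(t)) ≤ −2 d̄(t) · ½ e(t)ᵀ P(t) e(t) for all t ≥ t̄0. Then e(t) → 0 as t → ∞, and moreover |e(t)| < |e(t̄0)| √L exp(ε̄) + δ for every δ > 0 and all t ≥ t̄0 when e(t̄0) ≠ 0 (i.e. |e(t)| ≤ |e(t̄0)| √L exp(ε̄) for all t ≥ t̄0). -/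
open scoped RealInnerProductSpace
open Set Filter Real

/-! Multiplying the Lyapunov function `V = ½ eᵀPe` by the integrating factor `exp (2 ∫ d̄)`
makes it nonincreasing (Grönwall), so `V(t) ≤ V(t̄0) exp (-2 ∫_{t̄0}^t d̄)`. Sandwiching `V`
between `½ |e|²` (from `P ≥ I`) and `½ L |e|²` (at `t̄0`) gives
`|e(t)| ≤ |e(t̄0)| √L exp (-∫_{t̄0}^t d̄)`, which is bounded by `exp ε̄` and tends to `0`.
-/

theorem le_mul_exp_integral_of_deriv_le_mul {V k : ℝ → ℝ} {t0 : ℝ}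
    (hVc : ContinuousOn V (Ici t0)) (hVd : DifferentiableOn ℝ V (Ioi t0)) (hk : Continuous k)
    (hle : ∀ t, t0 < t → deriv V t ≤ k t * V t) :
    ∀ t, t0 ≤ t → V t ≤ V t0 * exp (∫ s in t0..t, k s) := by
  set K : ℝ → ℝ := fun t => ∫ s in t0..t, k s
  have hK : ∀ t, HasDerivAt K (k t) t := fun t =>
    (hk.integral_hasStrictDerivAt t0 t).hasDerivAt
  set W : ℝ → ℝ := fun t => V t * exp (-K t)
  have hW : ∀ t, t0 < t →
      HasDerivAt W (deriv V t * exp (-K t) + V t * (exp (-K t) * -k t)) t := fun t ht =>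
    (hVd.differentiableAt (Ioi_mem_nhds ht)).hasDerivAt.mul (hK t).neg.exp
  have hanti : AntitoneOn W (Ici t0) := by
    have hKc : Continuous K := continuous_iff_continuousAt.2 fun t => (hK t).continuousAt
    refine antitoneOn_of_deriv_nonpos (convex_Ici t0)
      (hVc.mul (continuous_exp.comp hKc.neg).continuousOn) ?_ fun t ht => ?_
    · rw [interior_Ici]
      exact fun t ht => (hW t ht).differentiableAt.differentiableWithinAt
    · rw [interior_Ici] at ht
      rw [(hW t ht).deriv]
      have := mul_le_mul_of_nonneg_right (hle t ht) (exp_pos (-K t)).le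
      linarith
  intro t ht
  have hWt : W t ≤ V t0 := by simpa [W, K] using hanti self_mem_Ici ht ht
  calc V t = W t * exp (K t) := by
        simp only [W, mul_assoc, ← exp_add, neg_add_cancel, exp_zero, mul_one]
    _ ≤ V t0 * exp (K t) := by gcongr

section InnerProductSpace

variable {E : Type*} [NormedAddCommGroup E] [InnerProductSpace ℝ E]

theorem real_inner_self_apply_le_opNorm_mul_sq (A : E →L[ℝ] E) (x : E) :
    ⟪x, A x⟫ ≤ ‖A‖ * ‖x‖ ^ 2 :=
  calc ⟪x, A x⟫ ≤ ‖x‖ * ‖A x‖ := real_inner_le_norm _ _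
    _ ≤ ‖x‖ * (‖A‖ * ‖x‖) := by gcongr; exact A.le_opNorm x
    _ = ‖A‖ * ‖x‖ ^ 2 := by ring

theorem norm_le_of_real_inner_self_apply_le {A B : E →L[ℝ] E} {x y : E} {r : ℝ}
    (hA : ‖x‖ ^ 2 ≤ ⟪x, A x⟫) (hle : ⟪x, A x⟫ ≤ ⟪y, B y⟫ * r ^ 2) (hr : 0 ≤ r) :
    ‖x‖ ≤ ‖y‖ * √‖B‖ * r := by
  refine (sq_le_sq₀ (norm_nonneg x) (by positivity)).1 ?_
  calc ‖x‖ ^ 2 ≤ ‖B‖ * ‖y‖ ^ 2 * r ^ 2 := by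
        have := real_inner_self_apply_le_opNorm_mul_sq B y
        nlinarith [sq_nonneg r]
    _ = (‖y‖ * √‖B‖ * r) ^ 2 := by rw [mul_pow, mul_pow, sq_sqrt (norm_nonneg B)]; ring

end InnerProductSpace

theorem stmt7_general (n : ℕ) (t0 εbar L : ℝ)
    (P : ℝ → (EuclideanSpace ℝ (Fin n) →L[ℝ] EuclideanSpace ℝ (Fin n)))
    (hP : ContDiff ℝ 1 P)
    (hPI : ∀ t, t0 ≤ t → ∀ x : EuclideanSpace ℝ (Fin n), ‖x‖ ^ 2 ≤ ⟪x, P t x⟫)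
    (hPL : ‖P t0‖ ≤ L)
    (dbar : ℝ → ℝ) (hdbar : Continuous dbar)
    (hlow : ∀ t, t0 ≤ t → -εbar < ∫ s in t0..t, dbar s)
    (hdiv : Filter.Tendsto (fun t => ∫ s in t0..t, dbar s) Filter.atTop Filter.atTop)
    (e : ℝ → EuclideanSpace ℝ (Fin n)) (he : ContDiff ℝ 1 e)
    (hV : ∀ t, t0 ≤ t →
      deriv (fun s => (1 / 2 : ℝ) * ⟪e s, P s (e s)⟫) t ≤
        -2 * dbar t * ((1 / 2 : ℝ) * ⟪e t, P t (e t)⟫)) :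
    Filter.Tendsto e Filter.atTop (nhds 0) ∧
      ∀ t, t0 ≤ t → ‖e t‖ ≤ ‖e t0‖ * Real.sqrt L * Real.exp εbar := by
  have hVd : Differentiable ℝ fun s => (1 / 2 : ℝ) * ⟪e s, P s (e s)⟫ :=
    (contDiff_const.mul (he.inner ℝ (hP.clm_apply he))).differentiable one_ne_zero
  have hdecay : ∀ t, t0 ≤ t → ‖e t‖ ≤ ‖e t0‖ * √L * exp (-∫ s in t0..t, dbar s) := by
    intro t ht
    have hgr := le_mul_exp_integral_of_deriv_le_mul (k := fun s => -2 * dbar s)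
      hVd.continuous.continuousOn hVd.differentiableOn (continuous_const.mul hdbar)
      (fun t ht => hV t ht.le) t ht
    rw [intervalIntegral.integral_const_mul] at hgr
    have hsq : exp (-∫ s in t0..t, dbar s) ^ 2 = exp (-2 * ∫ s in t0..t, dbar s) := by
      rw [← exp_nat_mul]; ring_nf
    calc ‖e t‖ ≤ ‖e t0‖ * √‖P t0‖ * exp (-∫ s in t0..t, dbar s) :=
          norm_le_of_real_inner_self_apply_le (hPI t ht _) (by rw [hsq]; linarith)
            (exp_pos _).le
      _ ≤ ‖e t0‖ * √L * exp (-∫ s in t0..t, dbar s) := by gcongr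
  refine ⟨squeeze_zero_norm' (eventually_atTop.2 ⟨t0, hdecay⟩) ?_,
    fun t ht => (hdecay t ht).trans ?_⟩
  · simpa using (tendsto_exp_neg_atTop_nhds_zero.comp hdiv).const_mul (‖e t0‖ * √L)
  · gcongr
    linarith [hlow t ht]

/-- under the Grönwall differential inequality on all of `[t̄0, ∞)`,
with `P(t) ≥ I`, `|P(t̄0)| ≤ L`, `∫ d̄ > -ε̄` and `∫_{t̄0}^∞ d̄ = ∞`, the error tends to
zero and satisfies the uniform bound `|e(t)| ≤ |e(t̄0)| √L exp(ε̄)`. -/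
theorem stmt7 (n : ℕ) (t0 εbar L : ℝ) (hεbar : 0 < εbar) (hL : 1 < L)
    (P : ℝ → (EuclideanSpace ℝ (Fin n) →L[ℝ] EuclideanSpace ℝ (Fin n)))
    (hP : ContDiff ℝ 1 P)
    (hPsymm : ∀ t, t0 ≤ t → ∀ x y : EuclideanSpace ℝ (Fin n), ⟪P t x, y⟫ = ⟪x, P t y⟫)
    (hPI : ∀ t, t0 ≤ t → ∀ x : EuclideanSpace ℝ (Fin n), ‖x‖ ^ 2 ≤ ⟪x, P t x⟫)
    (hPL : ‖P t0‖ ≤ L)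
    (dbar : ℝ → ℝ) (hdbar : Continuous dbar)
    (hlow : ∀ t, t0 ≤ t → -εbar < ∫ s in t0..t, dbar s)
    (hdiv : Filter.Tendsto (fun t => ∫ s in t0..t, dbar s) Filter.atTop Filter.atTop)
    (e : ℝ → EuclideanSpace ℝ (Fin n)) (he : ContDiff ℝ 1 e)
    (hV : ∀ t, t0 ≤ t →
      deriv (fun s => (1 / 2 : ℝ) * ⟪e s, P s (e s)⟫) t ≤
        -2 * dbar t * ((1 / 2 : ℝ) * ⟪e t, P t (e t)⟫)) :
    Filter.Tendsto e Filter.atTop (nhds 0) ∧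
      ∀ t, t0 ≤ t → ‖e t‖ ≤ ‖e t0‖ * Real.sqrt L * Real.exp εbar :=
  stmt7_general n t0 εbar L P hP hPI hPL dbar hdbar hlow hdiv e he hV
end

section
/- Fact I (integral domination lemma): Let t_0 ≥ 0 and let φ : [t_0, ∞) → ℝ_{>0}, ζ : [t_0, ∞) → ℝ_{≥0}, θ : [t_0, ∞) → ℝ_{≥0} be continuous with θ(t) ≠ 0 for almost every t ≥ t_0. Then for every ε > 0 there exist a C¹ function ℓ : [t_0, ∞) → ℝ_{≥0} and a continuous function h : [t_0, ∞) → ℝ_{≥0} such that (φ(t) − ℓ(t)θ(t))ζ(t) ≤ h(t) for all t ≥ t_0, φ(t) ≥ ℓ(t)θ(t) for all t ≥ t_0, ∫_{t_0}^{∞} h(s) ds < ε, and ℓ(t_0) = 0. -/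
/-!
The multiplier `ℓ` is a smooth selection, by a partition of unity, from convex sets of admissible
values: `c = 0` for `t ≤ t₀`, and `0 ≤ c`, `c θ ≤ φ ≤ c θ + r` for `t ≥ t₀`, where `r > 0` is a
continuous function with `∫ r ζ < ε`; then `h := (φ - ℓ θ) ζ ≤ r ζ`. A locally constant admissible
value exists where `θ > 0` (take `φ - r < c θ < φ`) and, with `c = 0`, wherever `φ < r`. So `r` only
has to exceed `φ` on the closed null set `Z = {t₀} ∪ {θ = 0}`: outer regularity of the measure with
density `|φ ζ|` gives an open `U ⊇ Z` of small weighted mass, an Urysohn function `χ` for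
`Z ⊆ U` does the rest, and `r = ρ + |φ| χ` with a small positive weight `ρ`.
-/

open MeasureTheory Set Filter Topology Manifold

theorem ContinuousOn.exists_continuous_eqOn_Ici {α β : Type*} [LinearOrder α] [TopologicalSpace α]
    [OrderClosedTopology α] [TopologicalSpace β] {f : α → β} {a : α}
    (hf : ContinuousOn f (Ici a)) : ∃ g : α → β, Continuous g ∧ EqOn g f (Ici a) :=
  ⟨fun x => f (max a x), hf.comp_continuous (continuous_const.max continuous_id)
    fun x => le_max_left a x, fun x hx => by simp only [max_eq_right (mem_Ici.1 hx)]⟩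

theorem convex_setOf_imp {𝕜 E : Type*} [Semiring 𝕜] [PartialOrder 𝕜] [AddCommMonoid E]
    [Module 𝕜 E] {P : Prop} {s : Set E} (hs : P → Convex 𝕜 s) : Convex 𝕜 {x | P → x ∈ s} := by
  by_cases hP : P
  · simpa only [hP, forall_const, ofPred_mem_eq] using hs hP
  · simpa only [hP, IsEmpty.forall_iff, ofPred_true] using convex_univ

theorem exists_contDiff_forall_mem_convex_of_local_const {E F : Type*} [NormedAddCommGroup E]
    [NormedSpace ℝ E] [FiniteDimensional ℝ E] [NormedAddCommGroup F] [NormedSpace ℝ F]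
    (n : ℕ∞) {t : E → Set F} (ht : ∀ x, Convex ℝ (t x))
    (Hloc : ∀ x, ∃ c : F, ∀ᶠ y in 𝓝 x, c ∈ t y) :
    ∃ g : E → F, ContDiff ℝ n g ∧ ∀ x, g x ∈ t x := by
  obtain ⟨g, hg⟩ := exists_contMDiffMap_forall_mem_convex_of_local_const 𝓘(ℝ, E) (n := n) ht Hloc
  exact ⟨g, contMDiff_iff_contDiff.1 g.contMDiff, hg⟩

theorem exists_nonneg_mul_lt_lt_mul_add {a p q : ℝ} (ha : 0 < a) (hp : 0 < p) (hq : 0 < q) :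
    ∃ c : ℝ, 0 ≤ c ∧ c * a < p ∧ p < c * a + q := by
  refine ⟨max 0 (p - q / 2) / a, by positivity, ?_, ?_⟩ <;> rw [div_mul_cancel₀ _ ha.ne']
  · exact max_lt hp (by linarith)
  · linarith [le_max_right 0 (p - q / 2)]

theorem exists_continuous_eqOn_one_integral_mul_lt {X : Type*} [TopologicalSpace X]
    [TopologicalSpace.PseudoMetrizableSpace X] [SecondCountableTopology X] [MeasurableSpace X]
    [BorelSpace X] {μ : Measure X} [IsLocallyFiniteMeasure μ] {Z : Set X} (hZ : IsClosed Z)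
    (hμZ : μ Z = 0) {g : X → ℝ} (hg : Continuous g) (hg0 : ∀ x, 0 ≤ g x) {ε : ℝ} (hε : 0 < ε) :
    ∃ χ : C(X, ℝ), EqOn χ 1 Z ∧ (∀ x, χ x ∈ Icc (0 : ℝ) 1) ∧
      Integrable (fun x => χ x * g x) μ ∧ ∫ x, χ x * g x ∂μ < ε := by
  let ν := μ.withDensity fun x => ENNReal.ofReal (g x)
  have : IsLocallyFiniteMeasure ν := IsLocallyFiniteMeasure.withDensity_ofReal hg
  -- `ν` is locally finite on a metrizable second-countable space, hence outer regular.
  obtain ⟨U, hZU, hU, hνU⟩ := Z.exists_isOpen_lt_of_lt (μ := ν) (ENNReal.ofReal ε)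
    (by rw [withDensity_absolutelyContinuous μ _ hμZ]; exact ENNReal.ofReal_pos.2 hε)
  obtain ⟨χ, hχ0, hχ1, hχI⟩ := exists_continuous_zero_one_of_isClosed hU.isClosed_compl hZ
    (disjoint_compl_left_iff_subset.2 hZU)
  have hle : ∫⁻ x, ENNReal.ofReal (χ x * g x) ∂μ ≤ ν U := by
    rw [withDensity_apply _ hU.measurableSet, ← lintegral_indicator hU.measurableSet]
    refine lintegral_mono fun x => ?_
    by_cases hx : x ∈ U
    · rw [indicator_of_mem hx]
      exact ENNReal.ofReal_le_ofReal (mul_le_of_le_one_left (hg0 x) (hχI x).2)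
    · simp [hχ0 hx]
  have hnn : 0 ≤ᵐ[μ] fun x => χ x * g x := ae_of_all _ fun x => mul_nonneg (hχI x).1 (hg0 x)
  have hint : Integrable (fun x => χ x * g x) μ :=
    ⟨(χ.continuous.mul hg).aestronglyMeasurable,
      (hasFiniteIntegral_iff_ofReal hnn).2 (hle.trans_lt (hνU.trans ENNReal.ofReal_lt_top))⟩
  refine ⟨χ, hχ1, hχI, hint, ?_⟩
  rw [integral_eq_lintegral_of_nonneg_ae hnn hint.aestronglyMeasurable]
  exact ENNReal.toReal_lt_of_lt_ofReal (hle.trans_lt hνU)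

theorem exists_continuous_pos_integral_mul_abs_lt {g : ℝ → ℝ} (hg : Continuous g) {ε : ℝ}
    (hε : 0 < ε) : ∃ ρ : ℝ → ℝ, Continuous ρ ∧ (∀ x, 0 < ρ x) ∧
      Integrable (fun x => ρ x * |g x|) ∧ ∫ x, ρ x * |g x| < ε := by
  let ρ x := ε / 4 * (1 + x ^ 2)⁻¹ / (1 + |g x|)
  have hρ : Continuous ρ :=
    (continuous_const.mul ((by fun_prop : Continuous fun x : ℝ => 1 + x ^ 2).inv₀
      fun x => by positivity)).div (by fun_prop) fun x => by positivity
  have hbound : ∀ x, ‖ρ x * |g x|‖ ≤ ε / 4 * (1 + x ^ 2)⁻¹ := fun x => by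
    rw [Real.norm_of_nonneg (by positivity), div_mul_eq_mul_div, div_le_iff₀ (by positivity)]
    nlinarith [abs_nonneg (g x), show 0 < ε / 4 * (1 + x ^ 2)⁻¹ by positivity]
  have hmaj : Integrable fun x : ℝ => ε / 4 * (1 + x ^ 2)⁻¹ := integrable_inv_one_add_sq.const_mul _
  have hint : Integrable fun x => ρ x * |g x| :=
    hmaj.mono' (hρ.mul hg.abs).aestronglyMeasurable (ae_of_all _ hbound)
  refine ⟨ρ, hρ, fun x => by positivity, hint, ?_⟩
  calc ∫ x, ρ x * |g x| ≤ ∫ x : ℝ, ε / 4 * (1 + x ^ 2)⁻¹ :=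
        integral_mono hint hmaj fun x => (le_abs_self _).trans (hbound x)
    _ = ε / 4 * Real.pi := by rw [integral_const_mul, integral_univ_inv_one_add_sq]
    _ < ε := by nlinarith [Real.pi_lt_four]

theorem exists_continuous_pos_gt_on_null_setIntegral_lt {s Z : Set ℝ} {φ ζ : ℝ → ℝ}
    (hφ : Continuous φ) (hζ : Continuous ζ) (hZ : IsClosed Z) (hZs : volume.restrict s Z = 0)
    {ε : ℝ} (hε : 0 < ε) : ∃ r : ℝ → ℝ, Continuous r ∧ (∀ x, 0 < r x) ∧ (∀ x ∈ Z, φ x < r x) ∧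
      IntegrableOn (fun x => r x * ζ x) s ∧ ∫ x in s, r x * ζ x < ε := by
  obtain ⟨ρ, hρ, hρpos, hρint, hρlt⟩ := exists_continuous_pos_integral_mul_abs_lt hζ (half_pos hε)
  obtain ⟨χ, hχZ, hχI, hχint, hχlt⟩ := exists_continuous_eqOn_one_integral_mul_lt hZ hZs
    (g := fun x => |φ x * ζ x|) (hφ.mul hζ).abs (fun x => abs_nonneg _) (half_pos hε)
  let r x := ρ x + |φ x| * χ x
  have hrpos : ∀ x, 0 < r x := fun x =>
    add_pos_of_pos_of_nonneg (hρpos x) (mul_nonneg (abs_nonneg _) (hχI x).1)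
  have hnorm : ∀ x, ‖r x * ζ x‖ = ρ x * |ζ x| + χ x * |φ x * ζ x| := fun x => by
    rw [norm_mul, Real.norm_eq_abs, Real.norm_eq_abs, abs_of_pos (hrpos x), abs_mul]
    ring
  have hmaj : IntegrableOn (fun x => ρ x * |ζ x| + χ x * |φ x * ζ x|) s :=
    hρint.integrableOn.add hχint
  have hint : IntegrableOn (fun x => r x * ζ x) s :=
    hmaj.mono' ((hρ.add (hφ.abs.mul χ.continuous)).mul hζ).aestronglyMeasurable
      (ae_of_all _ fun x => (hnorm x).le)
  refine ⟨r, hρ.add (hφ.abs.mul χ.continuous), hrpos, fun x hx => ?_, hint, ?_⟩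
  · simp only [r, hχZ hx, Pi.one_apply, mul_one]
    linarith [le_abs_self (φ x), hρpos x]
  calc ∫ x in s, r x * ζ x ≤ ∫ x in s, (ρ x * |ζ x| + χ x * |φ x * ζ x|) :=
        integral_mono hint hmaj fun x => (le_abs_self _).trans (hnorm x).le
    _ = (∫ x in s, ρ x * |ζ x|) + ∫ x in s, χ x * |φ x * ζ x| :=
        integral_add hρint.integrableOn hχint
    _ < ε := by
        have := setIntegral_le_integral (s := s) hρint
          (ae_of_all _ fun x => mul_nonneg (hρpos x).le (abs_nonneg (ζ x)))
        linarith

def admissibleMultipliers (t0 : ℝ) (φ θ r : ℝ → ℝ) (y : ℝ) : Set ℝ :=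
  {c | y ≤ t0 → c ∈ ({0} : Set ℝ)} ∩
    {c | t0 ≤ y → c ∈ Ici 0 ∩ {c | c * θ y ≤ φ y} ∩ {c | φ y - r y ≤ c * θ y}}

theorem convex_admissibleMultipliers (t0 : ℝ) (φ θ r : ℝ → ℝ) (y : ℝ) :
    Convex ℝ (admissibleMultipliers t0 φ θ r y) :=
  (convex_setOf_imp fun _ => convex_singleton 0).inter <| convex_setOf_imp fun _ =>
    ((convex_Ici 0).inter (convex_halfSpace_le (IsLinearMap.isLinearMap_smul' (θ y)) (φ y))).inter
      (convex_halfSpace_ge (IsLinearMap.isLinearMap_smul' (θ y)) (φ y - r y))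

theorem eventually_mem_admissibleMultipliers {t0 : ℝ} {φ θ r : ℝ → ℝ}
    (hφ : ContinuousOn φ (Ici t0)) (hθ : ContinuousOn θ (Ici t0)) (hr : ContinuousOn r (Ici t0))
    (hφpos : ∀ t, t0 ≤ t → 0 < φ t) (hθnn : ∀ t, t0 ≤ t → 0 ≤ θ t)
    (hrpos : ∀ t, t0 ≤ t → 0 < r t) (hφr : ∀ t, t0 ≤ t → (t = t0 ∨ θ t = 0) → φ t < r t) (x : ℝ) :
    ∃ c, ∀ᶠ y in 𝓝 x, c ∈ admissibleMultipliers t0 φ θ r y := by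
  rcases lt_or_ge x t0 with hx | hx
  · exact ⟨0, eventually_of_mem (Iio_mem_nhds hx) fun y hy =>
      ⟨fun _ => rfl, fun hy' => absurd hy' (not_le.2 hy)⟩⟩
  obtain ⟨c, hct0, hc0, hcφ, hcr⟩ :
      ∃ c, (x = t0 → c = 0) ∧ 0 ≤ c ∧ c * θ x < φ x ∧ φ x < c * θ x + r x := by
    by_cases hxZ : x = t0 ∨ θ x = 0
    · exact ⟨0, fun _ => rfl, le_rfl, by simpa using hφpos x hx, by simpa using hφr x hx hxZ⟩
    push Not at hxZ
    obtain ⟨c, hc⟩ := exists_nonneg_mul_lt_lt_mul_add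
      ((hθnn x hx).lt_of_ne' hxZ.2) (hφpos x hx) (hrpos x hx)
    exact ⟨c, fun h => absurd h hxZ.1, hc⟩
  have hθc : ContinuousWithinAt (fun y => c * θ y) (Ici t0) x := (hθ x hx).const_smul c
  have hev : ∀ᶠ y in 𝓝[Ici t0] x, c * θ y < φ y ∧ φ y < c * θ y + r y :=
    (hθc.eventually_lt (hφ x hx) hcφ).and (hφ x hx |>.eventually_lt (hθc.add (hr x hx)) hcr)
  have hzero : ∀ᶠ y in 𝓝 x, y ≤ t0 → c = 0 := by
    rcases hx.eq_or_lt with rfl | hx'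
    · exact Eventually.of_forall fun _ _ => hct0 rfl
    · filter_upwards [Ioi_mem_nhds hx'] with y hy hy' using absurd hy' (not_le.2 hy)
  refine ⟨c, ?_⟩
  filter_upwards [hzero, eventually_nhdsWithin_iff.1 hev] with y h0 h
  exact ⟨h0, fun hy => ⟨⟨hc0, (h hy).1.le⟩, show φ y - r y ≤ c * θ y by linarith [(h hy).2]⟩⟩

theorem exists_contDiff_admissibleMultiplier {t0 : ℝ} {φ θ r : ℝ → ℝ} (n : ℕ∞)
    (hφ : ContinuousOn φ (Ici t0)) (hθ : ContinuousOn θ (Ici t0)) (hr : ContinuousOn r (Ici t0))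
    (hφpos : ∀ t, t0 ≤ t → 0 < φ t) (hθnn : ∀ t, t0 ≤ t → 0 ≤ θ t)
    (hrpos : ∀ t, t0 ≤ t → 0 < r t) (hφr : ∀ t, t0 ≤ t → (t = t0 ∨ θ t = 0) → φ t < r t) :
    ∃ l : ℝ → ℝ, ContDiff ℝ n l ∧ l t0 = 0 ∧
      ∀ t, t0 ≤ t → 0 ≤ l t ∧ l t * θ t ≤ φ t ∧ φ t - l t * θ t ≤ r t := by
  obtain ⟨l, hl, hlT⟩ := exists_contDiff_forall_mem_convex_of_local_const n
    (convex_admissibleMultipliers t0 φ θ r)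
    (eventually_mem_admissibleMultipliers hφ hθ hr hφpos hθnn hrpos hφr)
  refine ⟨l, hl, (hlT t0).1 le_rfl, fun t ht => ?_⟩
  obtain ⟨⟨hl0, hlφ⟩, hlr⟩ := (hlT t).2 ht
  exact ⟨hl0, hlφ, by linarith [show φ t - r t ≤ l t * θ t from hlr]⟩

theorem stmt11_general (t0 : ℝ)
    (φ ζ θ : ℝ → ℝ)
    (hφc : ContinuousOn φ (Set.Ici t0)) (hζc : ContinuousOn ζ (Set.Ici t0))
    (hθc : ContinuousOn θ (Set.Ici t0))
    (hφpos : ∀ t, t0 ≤ t → 0 < φ t)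
    (hζnn : ∀ t, t0 ≤ t → 0 ≤ ζ t)
    (hθnn : ∀ t, t0 ≤ t → 0 ≤ θ t)
    (hθae : ∀ᵐ t ∂(volume.restrict (Set.Ici t0)), θ t ≠ 0) :
    ∀ ε : ℝ, 0 < ε →
      ∃ l h : ℝ → ℝ,
        ContDiff ℝ 1 l ∧ ContinuousOn h (Set.Ici t0) ∧
        (∀ t, t0 ≤ t → 0 ≤ l t) ∧ (∀ t, t0 ≤ t → 0 ≤ h t) ∧
        (∀ t, t0 ≤ t → (φ t - l t * θ t) * ζ t ≤ h t) ∧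
        (∀ t, t0 ≤ t → l t * θ t ≤ φ t) ∧
        IntegrableOn h (Set.Ici t0) volume ∧
        (∫ s in Set.Ici t0, h s) < ε ∧
        l t0 = 0 := by
  intro ε hε
  obtain ⟨φ', hφ', hφφ'⟩ := hφc.exists_continuous_eqOn_Ici
  obtain ⟨ζ', hζ', hζζ'⟩ := hζc.exists_continuous_eqOn_Ici
  let Z := {t0} ∪ (Ici t0 ∩ θ ⁻¹' {0})
  have hZ : IsClosed Z :=
    isClosed_singleton.union (hθc.preimage_isClosed_of_isClosed isClosed_Ici isClosed_singleton)
  have hZ0 : volume.restrict (Ici t0) Z = 0 := measure_union_null (measure_singleton t0)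
    (measure_mono_null (fun t ht => not_not.2 ht.2) (ae_iff.1 hθae))
  obtain ⟨r, hr, hrpos, hφr, hrint, hrlt⟩ :=
    exists_continuous_pos_gt_on_null_setIntegral_lt hφ' hζ' hZ hZ0 hε
  have hφrZ : ∀ t, t0 ≤ t → (t = t0 ∨ θ t = 0) → φ t < r t := fun t ht htZ =>
    hφφ' ht ▸ hφr t (htZ.imp id fun h0 => ⟨ht, h0⟩)
  obtain ⟨l, hl, hlt0, hlt⟩ := exists_contDiff_admissibleMultiplier 1 hφc hθc hr.continuousOn
    hφpos hθnn (fun t _ => hrpos t) hφrZ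
  let h t := (φ t - l t * θ t) * ζ t
  have hh : ContinuousOn h (Ici t0) := (hφc.sub (hl.continuous.continuousOn.mul hθc)).mul hζc
  have hh0 : ∀ t, t0 ≤ t → 0 ≤ h t := fun t ht =>
    mul_nonneg (sub_nonneg.2 (hlt t ht).2.1) (hζnn t ht)
  have hhr : ∀ t ∈ Ici t0, h t ≤ r t * ζ' t := fun t ht => by
    rw [hζζ' ht]
    exact mul_le_mul_of_nonneg_right (hlt t ht).2.2 (hζnn t ht)
  have hint : IntegrableOn h (Ici t0) :=
    hrint.mono' (hh.aestronglyMeasurable measurableSet_Ici) <|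
      (ae_restrict_iff' measurableSet_Ici).2 <| Eventually.of_forall fun t ht =>
        (Real.norm_of_nonneg (hh0 t ht)).trans_le (hhr t ht)
  refine ⟨l, h, hl, hh, fun t ht => (hlt t ht).1, hh0, fun _ _ => le_rfl,
    fun t ht => (hlt t ht).2.1, hint, ?_, hlt0⟩
  exact (setIntegral_mono_on hint hrint measurableSet_Ici hhr).trans_lt hrlt

/-- Fact I, integral domination lemma. -/
theorem stmt11 (t0 : ℝ) (ht0 : 0 ≤ t0)
    (φ ζ θ : ℝ → ℝ)
    (hφc : ContinuousOn φ (Set.Ici t0)) (hζc : ContinuousOn ζ (Set.Ici t0))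
    (hθc : ContinuousOn θ (Set.Ici t0))
    (hφpos : ∀ t, t0 ≤ t → 0 < φ t)
    (hζnn : ∀ t, t0 ≤ t → 0 ≤ ζ t)
    (hθnn : ∀ t, t0 ≤ t → 0 ≤ θ t)
    (hθae : ∀ᵐ t ∂(volume.restrict (Set.Ici t0)), θ t ≠ 0) :
    ∀ ε : ℝ, 0 < ε →
      ∃ l h : ℝ → ℝ,
        ContDiff ℝ 1 l ∧ ContinuousOn h (Set.Ici t0) ∧
        (∀ t, t0 ≤ t → 0 ≤ l t) ∧ (∀ t, t0 ≤ t → 0 ≤ h t) ∧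
        (∀ t, t0 ≤ t → (φ t - l t * θ t) * ζ t ≤ h t) ∧
        (∀ t, t0 ≤ t → l t * θ t ≤ φ t) ∧
        IntegrableOn h (Set.Ici t0) volume ∧
        (∫ s in Set.Ici t0, h s) < ε ∧
        l t0 = 0 :=
  stmt11_general t0 φ ζ θ hφc hζc hθc hφpos hζnn hθnn hθae
end

section
/- Forward completeness of the system in Example 3.1: For every locally Lipschitz a : ℝ → ℝ, every solution x(t) = (x_1(t), x_2(t), x_3(t)) of the system ẋ_1 = −x_1 + a(x_1)x_2, ẋ_2 = −x_1 a(x_1) + x_2/(x_1² + x_2² + x_3² + 1), ẋ_3 = −x_3/(x_1² + x_2² + 1) with initial condition x(0) = x_0 exists for all t ≥ 0 and satisfies |x(t)| ≤ 2√t + √2 |x_0|. -/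
/-!
`V x = x₁² + x₂² + x₃²` satisfies `V̇ ≤ 2` along the system: the cross terms in `a` cancel,
`x₂² / (|x|² + 1) ≤ 1`, and the `x₃` term is nonpositive. Hence `V (x t) ≤ V x₀ + 2 t` along every
solution, which gives the bound. For existence on `[0, T)`, multiply the field by a cutoff equal to
`1` on a ball containing the sublevel set `{V ≤ V x₀ + 2 T}`: the cut-off field is globally
bounded, so Picard–Lindelöf gives a solution on `[0, T)`, and by the same estimate it never leaves
the ball, so it solves the original system. By uniqueness these solutions agree where both are
defined and glue to a global one.
-/

open Set Metric

section Cutoff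

variable {E : Type*} [SeminormedAddCommGroup E]

def radialCutoff (R : ℝ) (x : E) : ℝ := min 1 (max 0 (R + 1 - ‖x‖))

theorem radialCutoff_nonneg (R : ℝ) (x : E) : 0 ≤ radialCutoff R x :=
  le_min zero_le_one (le_max_left _ _)

theorem radialCutoff_le_one (R : ℝ) (x : E) : radialCutoff R x ≤ 1 := min_le_left _ _

theorem radialCutoff_of_norm_le {R : ℝ} {x : E} (h : ‖x‖ ≤ R) : radialCutoff R x = 1 := by
  unfold radialCutoff
  rw [max_eq_right (by linarith), min_eq_left (by linarith)]

theorem radialCutoff_of_le_norm {R : ℝ} {x : E} (h : R + 1 ≤ ‖x‖) : radialCutoff R x = 0 := by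
  unfold radialCutoff
  rw [max_eq_left (by linarith), min_eq_right zero_le_one]

theorem locallyLipschitz_radialCutoff (R : ℝ) : LocallyLipschitz (radialCutoff (E := E) R) :=
  (((LocallyLipschitz.const (R + 1)).sub lipschitzWith_one_norm.locallyLipschitz).const_max
    0).const_min 1

end Cutoff

section Prod

variable {F G : Type*} [NormedAddCommGroup F] [NormedSpace ℝ F] [NormedAddCommGroup G]
  [NormedSpace ℝ G] {f : ℝ → F × G} {w : F × G} {t : ℝ}

theorem HasDerivAt.fst (h : HasDerivAt f w t) : HasDerivAt (fun s ↦ (f s).1) w.1 t :=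
  (ContinuousLinearMap.fst ℝ F G).hasFDerivAt.comp_hasDerivAt t h

theorem HasDerivAt.snd (h : HasDerivAt f w t) : HasDerivAt (fun s ↦ (f s).2) w.2 t :=
  (ContinuousLinearMap.snd ℝ F G).hasFDerivAt.comp_hasDerivAt t h

end Prod

section Lyapunov

variable {E : Type*} [NormedAddCommGroup E] [NormedSpace ℝ E]

theorem LocallyLipschitz.smul {α : Type*} [PseudoMetricSpace α] {f : α → ℝ} {g : α → E}
    (hf : LocallyLipschitz f) (hg : LocallyLipschitz g) :
    LocallyLipschitz fun x ↦ f x • g x :=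
  (contDiff_smul (𝕜 := ℝ) (n := 1)).locallyLipschitz.comp (hf.prodMk hg)

theorem exists_norm_radialCutoff_smul_le [ProperSpace E] {v : E → E} (hv : Continuous v)
    (R : ℝ) : ∃ C, ∀ x, ‖radialCutoff R x • v x‖ ≤ C := by
  obtain ⟨C, hC⟩ := (isCompact_closedBall (0 : E) (R + 1)).exists_bound_of_continuousOn
    hv.continuousOn
  refine ⟨max C 0, fun x ↦ ?_⟩
  rcases le_or_gt ‖x‖ (R + 1) with hx | hx
  · calc ‖radialCutoff R x • v x‖ = radialCutoff R x * ‖v x‖ := by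
          rw [norm_smul, Real.norm_of_nonneg (radialCutoff_nonneg R x)]
      _ ≤ 1 * C := by
          gcongr
          · exact radialCutoff_le_one R x
          · exact hC x (mem_closedBall_zero_iff.mpr hx)
      _ ≤ max C 0 := by rw [one_mul]; exact le_max_left _ _
  · simp [radialCutoff_of_le_norm hx.le]

theorem exists_forall_mem_Ioo_hasDerivAt_of_norm_le [ProperSpace E]
    {G : E → E} (hG : LocallyLipschitz G) {C : ℝ} (hC : ∀ x, ‖G x‖ ≤ C) (x₀ : E) {T : ℝ}
    (hT : 0 ≤ T) : ∃ f : ℝ → E, f 0 = x₀ ∧ ∀ t ∈ Ioo (-T) T, HasDerivAt f (G (f t)) t := by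
  have hC₀ : 0 ≤ C := (norm_nonneg _).trans (hC x₀)
  obtain ⟨K, hK⟩ := hG.locallyLipschitzOn.exists_lipschitzOnWith_of_compact
    (isCompact_closedBall x₀ (C * T))
  have hPL : IsPicardLindelof (fun _ ↦ G) (tmin := -T) (tmax := T) ⟨0, by simp [hT]⟩ x₀
      ⟨C * T, by positivity⟩ 0 ⟨C, hC₀⟩ K :=
    .of_time_independent (fun x _ ↦ hC x) hK (by simp; exact le_rfl)
  obtain ⟨f, hf₀, hf⟩ := hPL.exists_eq_forall_mem_Icc_hasDerivWithinAt₀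
  exact ⟨f, hf₀, fun t ht ↦
    (hf t (Ioo_subset_Icc_self ht)).hasDerivAt (Icc_mem_nhds ht.1 ht.2)⟩

theorem le_add_mul_of_fderiv_le {v : E → E} {V : E → ℝ} {c t : ℝ} {f : ℝ → E}
    (hV : Differentiable ℝ V) (hVv : ∀ x, fderiv ℝ V x (v x) ≤ c)
    (hf : ∀ s ∈ Icc 0 t, HasDerivAt f (v (f s)) s) (ht : 0 ≤ t) :
    V (f t) ≤ V (f 0) + c * t := by
  have hVf : ∀ s ∈ Icc 0 t, HasDerivAt (V ∘ f) (fderiv ℝ V (f s) (v (f s))) s := fun s hs ↦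
    (hV (f s)).hasFDerivAt.comp_hasDerivAt s (hf s hs)
  have := (convex_Icc 0 t).image_sub_le_mul_sub_of_deriv_le
    (HasDerivAt.continuousOn hVf)
    (fun s hs ↦ (hVf s (interior_subset hs)).differentiableAt.differentiableWithinAt)
    (fun s hs ↦ (hVf s (interior_subset hs)).deriv ▸ hVv _) 0 (left_mem_Icc.mpr ht) t
    (right_mem_Icc.mpr ht) ht
  simp only [Function.comp_apply, sub_zero] at this
  linarith

theorem ODE_solution_unique_of_locallyLipschitz {v : E → E} (hv : LocallyLipschitz v) {f g : ℝ → E}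
    {a b : ℝ} (hf : ∀ t ∈ Icc a b, HasDerivAt f (v (f t)) t)
    (hg : ∀ t ∈ Icc a b, HasDerivAt g (v (g t)) t) (ha : f a = g a) : EqOn f g (Icc a b) := by
  have hfc := HasDerivAt.continuousOn hf
  have hgc := HasDerivAt.continuousOn hg
  obtain ⟨K, hK⟩ := hv.locallyLipschitzOn.exists_lipschitzOnWith_of_compact
    ((isCompact_Icc.image_of_continuousOn hfc).union (isCompact_Icc.image_of_continuousOn hgc))
  exact ODE_solution_unique_of_mem_Icc_right (v := fun _ ↦ v) (fun _ _ ↦ hK) hfc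
    (fun t ht ↦ (hf t (Ico_subset_Icc_self ht)).hasDerivWithinAt)
    (fun t ht ↦ .inl (mem_image_of_mem f (Ico_subset_Icc_self ht))) hgc
    (fun t ht ↦ (hg t (Ico_subset_Icc_self ht)).hasDerivWithinAt)
    (fun t ht ↦ .inr (mem_image_of_mem g (Ico_subset_Icc_self ht))) ha

theorem exists_forall_hasDerivAt_of_forall_Ico {v : E → E} (hv : LocallyLipschitz v) {x₀ : E}
    (h : ∀ T > 0, ∃ f : ℝ → E, f 0 = x₀ ∧ ∀ t ∈ Ico 0 T, HasDerivAt f (v (f t)) t) :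
    ∃ f : ℝ → E, f 0 = x₀ ∧ ∀ t, 0 ≤ t → HasDerivAt f (v (f t)) t := by
  choose fs hfs₀ hfs using fun n : ℕ ↦ h (n + 1) (by positivity)
  have agree : ∀ k m : ℕ, ∀ s : ℝ, 0 ≤ s → s < k + 1 → s < m + 1 → fs k s = fs m s :=
    fun k m s hs hk hm ↦ ODE_solution_unique_of_locallyLipschitz hv
      (fun u hu ↦ hfs k u ⟨hu.1, hu.2.trans_lt hk⟩) (fun u hu ↦ hfs m u ⟨hu.1, hu.2.trans_lt hm⟩)
      ((hfs₀ k).trans (hfs₀ m).symm) ⟨hs, le_rfl⟩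
  have lt_ceil_add_one (s : ℝ) : s < ⌈s⌉₊ + 1 := (Nat.le_ceil s).trans_lt (lt_add_one _)
  refine ⟨fun t ↦ fs ⌈t⌉₊ t, by simpa using hfs₀ 0, fun t ht ↦ ?_⟩
  set m := ⌈t⌉₊ with hm
  -- Near `t = 0` the glued curve is `fs 0` also at negative times, where the `fs n` need not agree.
  have near : ∀ s < t + 1, (s < 0 → m = 0) → fs ⌈s⌉₊ s = fs m s := by
    intro s hst hneg
    rcases le_or_gt 0 s with hs | hs
    · exact agree _ _ s hs (lt_ceil_add_one s) (hst.trans_le (by linarith [Nat.le_ceil t]))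
    · rw [Nat.ceil_eq_zero.mpr hs.le, hneg hs]
  have hneg : ∀ᶠ s in nhds t, s < 0 → m = 0 := by
    rcases ht.eq_or_lt with rfl | hpos
    · exact .of_forall fun _ _ ↦ by simp [hm]
    · filter_upwards [Ioi_mem_nhds hpos] with s hs hs' using absurd hs (not_lt.mpr hs'.le)
  have hev : (fun s ↦ fs ⌈s⌉₊ s) =ᶠ[nhds t] fs m := by
    filter_upwards [Iio_mem_nhds (lt_add_one t), hneg] with s h₁ h₂ using near s h₁ h₂
  exact (hfs m t ⟨ht, lt_ceil_add_one t⟩).congr_of_eventuallyEq hev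

theorem exists_forall_mem_Ico_hasDerivAt_of_fderiv_le [ProperSpace E] {v : E → E} {V : E → ℝ}
    {c : ℝ} (hv : LocallyLipschitz v) (hV : Differentiable ℝ V)
    (hVv : ∀ x, fderiv ℝ V x (v x) ≤ c) (hbdd : ∀ M, Bornology.IsBounded {x | V x ≤ M})
    (x₀ : E) {T : ℝ} (hT : 0 < T) :
    ∃ f : ℝ → E, f 0 = x₀ ∧ ∀ t ∈ Ico 0 T, HasDerivAt f (v (f t)) t := by
  obtain ⟨R, hsub⟩ := (hbdd (V x₀ + max c 0 * T)).subset_closedBall 0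
  set G : E → E := fun x ↦ radialCutoff R x • v x
  obtain ⟨C, hC⟩ := exists_norm_radialCutoff_smul_le hv.continuous R
  obtain ⟨f, hf₀, hf⟩ := exists_forall_mem_Ioo_hasDerivAt_of_norm_le
    ((locallyLipschitz_radialCutoff R).smul hv) hC x₀ hT.le
  have hVG : ∀ x, fderiv ℝ V x (G x) ≤ max c 0 := fun x ↦ by
    simp only [G, map_smul, smul_eq_mul]
    calc _ ≤ radialCutoff R x * max c 0 :=
          mul_le_mul_of_nonneg_left ((hVv x).trans (le_max_left _ _)) (radialCutoff_nonneg R x)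
      _ ≤ max c 0 := mul_le_of_le_one_left (le_max_right _ _) (radialCutoff_le_one R x)
  have hfG : ∀ t ∈ Ico 0 T, HasDerivAt f (G (f t)) t := fun t ht ↦
    hf t ⟨by linarith [ht.1], ht.2⟩
  have hR : ∀ t ∈ Ico 0 T, ‖f t‖ ≤ R := fun t ht ↦ by
    have hVf := le_add_mul_of_fderiv_le hV hVG
      (fun s hs ↦ hfG s ⟨hs.1, hs.2.trans_lt ht.2⟩) ht.1
    rw [hf₀] at hVf
    have hfR : f t ∈ closedBall 0 R := hsub <| hVf.trans <|
      add_le_add_right (mul_le_mul_of_nonneg_left ht.2.le (le_max_right _ _)) _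
    simpa using hfR
  refine ⟨f, hf₀, fun t ht ↦ ?_⟩
  simpa [G, radialCutoff_of_norm_le (hR t ht)] using hfG t ht

theorem exists_forall_hasDerivAt_of_fderiv_le [ProperSpace E] {v : E → E} {V : E → ℝ} {c : ℝ}
    (hv : LocallyLipschitz v) (hV : Differentiable ℝ V) (hVv : ∀ x, fderiv ℝ V x (v x) ≤ c)
    (hbdd : ∀ M, Bornology.IsBounded {x | V x ≤ M}) (x₀ : E) :
    ∃ f : ℝ → E, f 0 = x₀ ∧ ∀ t, 0 ≤ t → HasDerivAt f (v (f t)) t :=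
  exists_forall_hasDerivAt_of_forall_Ico hv fun _ hT ↦
    exists_forall_mem_Ico_hasDerivAt_of_fderiv_le hv hV hVv hbdd x₀ hT

end Lyapunov

theorem sqrt_le_two_mul_sqrt_add_sqrt_two_mul_sqrt {s t u : ℝ} (ht : 0 ≤ t) (hu : 0 ≤ u)
    (h : s ≤ u + 2 * t) : √s ≤ 2 * √t + √2 * √u := by
  rw [Real.sqrt_le_left (by positivity)]
  nlinarith [Real.sq_sqrt ht, Real.sq_sqrt hu, Real.sq_sqrt zero_le_two,
    mul_nonneg (mul_nonneg (Real.sqrt_nonneg 2) (Real.sqrt_nonneg t)) (Real.sqrt_nonneg u)]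

-- The norm on `ℝ × ℝ × ℝ` is the sup norm; the paper's `|x|` is `√(euclidSq x)`.
def euclidSq (x : ℝ × ℝ × ℝ) : ℝ := x.1 ^ 2 + x.2.1 ^ 2 + x.2.2 ^ 2

theorem differentiable_euclidSq : Differentiable ℝ euclidSq := by
  unfold euclidSq
  fun_prop

theorem fderiv_euclidSq_apply (x y : ℝ × ℝ × ℝ) :
    fderiv ℝ euclidSq x y = 2 * (x.1 * y.1 + x.2.1 * y.2.1 + x.2.2 * y.2.2) := by
  have h₁ : HasFDerivAt (fun x : ℝ × ℝ × ℝ ↦ x.1) (ContinuousLinearMap.fst ℝ ℝ (ℝ × ℝ)) x :=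
    hasFDerivAt_fst
  have h₂ : HasFDerivAt (fun x : ℝ × ℝ × ℝ ↦ x.2.1)
      ((ContinuousLinearMap.fst ℝ ℝ ℝ).comp (ContinuousLinearMap.snd ℝ ℝ (ℝ × ℝ))) x :=
    hasFDerivAt_snd.fst
  have h₃ : HasFDerivAt (fun x : ℝ × ℝ × ℝ ↦ x.2.2)
      ((ContinuousLinearMap.snd ℝ ℝ ℝ).comp (ContinuousLinearMap.snd ℝ ℝ (ℝ × ℝ))) x :=
    hasFDerivAt_snd.snd
  unfold euclidSq
  rw [(((h₁.pow 2).fun_add (h₂.pow 2)).fun_add (h₃.pow 2)).fderiv]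
  simp
  ring

theorem norm_le_sqrt_euclidSq (x : ℝ × ℝ × ℝ) : ‖x‖ ≤ √(euclidSq x) := by
  have h : ∀ u : ℝ, u ^ 2 ≤ euclidSq x → ‖u‖ ≤ √(euclidSq x) := fun u hu ↦ by
    rw [Real.norm_eq_abs, ← Real.sqrt_sq_eq_abs]
    exact Real.sqrt_le_sqrt hu
  rw [Prod.norm_def, Prod.norm_def]
  refine max_le (h _ ?_) (max_le (h _ ?_) (h _ ?_)) <;> unfold euclidSq <;>
    linarith [sq_nonneg x.1, sq_nonneg x.2.1, sq_nonneg x.2.2]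

theorem isBounded_setOf_euclidSq_le (M : ℝ) : Bornology.IsBounded {x | euclidSq x ≤ M} :=
  isBounded_closedBall.subset fun x (hx : euclidSq x ≤ M) ↦
    mem_closedBall_zero_iff.mpr <| (norm_le_sqrt_euclidSq x).trans (Real.sqrt_le_sqrt hx)

noncomputable def vectorField (a : ℝ → ℝ) (x : ℝ × ℝ × ℝ) : ℝ × ℝ × ℝ :=
  (-x.1 + a x.1 * x.2.1,
    -x.1 * a x.1 + x.2.1 / (x.1 ^ 2 + x.2.1 ^ 2 + x.2.2 ^ 2 + 1),
    -x.2.2 / (x.1 ^ 2 + x.2.1 ^ 2 + 1))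

theorem locallyLipschitz_vectorField {a : ℝ → ℝ} (ha : LocallyLipschitz a) :
    LocallyLipschitz (vectorField a) := by
  have hΦ : ContDiff ℝ 1 fun p : ℝ × ℝ × ℝ × ℝ ↦ ((-p.2.1 + p.1 * p.2.2.1,
      -p.2.1 * p.1 + p.2.2.1 / (p.2.1 ^ 2 + p.2.2.1 ^ 2 + p.2.2.2 ^ 2 + 1),
      -p.2.2.2 / (p.2.1 ^ 2 + p.2.2.1 ^ 2 + 1)) : ℝ × ℝ × ℝ) := by
    fun_prop (disch := intro; positivity)
  exact hΦ.locallyLipschitz.comp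
    ((ha.comp LipschitzWith.prod_fst.locallyLipschitz).prodMk LocallyLipschitz.id)

theorem fderiv_euclidSq_vectorField_le (a : ℝ → ℝ) (x : ℝ × ℝ × ℝ) :
    fderiv ℝ euclidSq x (vectorField a x) ≤ 2 := by
  obtain ⟨p, q, r⟩ := x
  rw [fderiv_euclidSq_apply]
  simp only [vectorField]
  have hq : q ^ 2 / (p ^ 2 + q ^ 2 + r ^ 2 + 1) ≤ 1 := by
    rw [div_le_one (by positivity)]
    nlinarith [sq_nonneg p, sq_nonneg r]
  have hr : 0 ≤ r ^ 2 / (p ^ 2 + q ^ 2 + 1) := by positivity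
  have expand : p * (-p + a p * q) + q * (-p * a p + q / (p ^ 2 + q ^ 2 + r ^ 2 + 1)) +
      r * (-r / (p ^ 2 + q ^ 2 + 1)) =
      -p ^ 2 + q ^ 2 / (p ^ 2 + q ^ 2 + r ^ 2 + 1) - r ^ 2 / (p ^ 2 + q ^ 2 + 1) := by
    ring
  rw [expand]
  nlinarith [sq_nonneg p]

/-- forward completeness of Example 3.1: for locally Lipschitz `a`, the
system (3.31a) has a global solution from every initial state, and every solution
satisfies `|x(t)| ≤ 2√t + √2 |x_0|`. -/
theorem stmt15 (a : ℝ → ℝ) (ha : LocallyLipschitz a) (x01 x02 x03 : ℝ) :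
    (∃ x1 x2 x3 : ℝ → ℝ, x1 0 = x01 ∧ x2 0 = x02 ∧ x3 0 = x03 ∧
      ∀ t : ℝ, 0 ≤ t →
        HasDerivAt x1 (-(x1 t) + a (x1 t) * x2 t) t ∧
        HasDerivAt x2 (-(x1 t) * a (x1 t) +
          x2 t / ((x1 t) ^ 2 + (x2 t) ^ 2 + (x3 t) ^ 2 + 1)) t ∧
        HasDerivAt x3 (-(x3 t) / ((x1 t) ^ 2 + (x2 t) ^ 2 + 1)) t) ∧
    ∀ x1 x2 x3 : ℝ → ℝ, x1 0 = x01 → x2 0 = x02 → x3 0 = x03 →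
      (∀ t : ℝ, 0 ≤ t →
        HasDerivAt x1 (-(x1 t) + a (x1 t) * x2 t) t ∧
        HasDerivAt x2 (-(x1 t) * a (x1 t) +
          x2 t / ((x1 t) ^ 2 + (x2 t) ^ 2 + (x3 t) ^ 2 + 1)) t ∧
        HasDerivAt x3 (-(x3 t) / ((x1 t) ^ 2 + (x2 t) ^ 2 + 1)) t) →
      ∀ t : ℝ, 0 ≤ t →
        Real.sqrt ((x1 t) ^ 2 + (x2 t) ^ 2 + (x3 t) ^ 2) ≤
          2 * Real.sqrt t + Real.sqrt 2 * Real.sqrt (x01 ^ 2 + x02 ^ 2 + x03 ^ 2) := by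
  constructor
  · obtain ⟨f, hf₀, hf⟩ := exists_forall_hasDerivAt_of_fderiv_le
      (locallyLipschitz_vectorField ha) differentiable_euclidSq (fderiv_euclidSq_vectorField_le a)
      isBounded_setOf_euclidSq_le (x01, x02, x03)
    refine ⟨fun t ↦ (f t).1, fun t ↦ (f t).2.1, fun t ↦ (f t).2.2, by simp [hf₀], by simp [hf₀],
      by simp [hf₀], fun t ht ↦ ?_⟩
    have hft := hf t ht
    exact ⟨hft.fst, hft.snd.fst, hft.snd.snd⟩
  · intro x1 x2 x3 h1 h2 h3 hx t ht
    have hsol : ∀ s ∈ Icc 0 t, HasDerivAt (fun s ↦ (x1 s, x2 s, x3 s))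
        (vectorField a (x1 s, x2 s, x3 s)) s := fun s hs ↦
      have ⟨hx1, hx2, hx3⟩ := hx s hs.1
      hx1.prodMk (hx2.prodMk hx3)
    have hV := le_add_mul_of_fderiv_le differentiable_euclidSq
      (fderiv_euclidSq_vectorField_le a) hsol ht
    simp only [euclidSq, h1, h2, h3] at hV
    exact sqrt_le_two_mul_sqrt_add_sqrt_two_mul_sqrt ht (by positivity) hV
end
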